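/- Let A ⊂ ℝ^d be a finite set, n ∈ ℕ, and let P ⊂ ∪_{k=1}^{n−1} 𝒟_k be a finite family of pairwise disjoint dyadic cubes. Then Σ_{Q̃∈P} card(A ∩ B_n(Q̃)) ≤ 3^d · card(A). -/

import Mathlib

open MeasureTheory Filter Set Metric
open scoped ENNReal NNReal Topology Classical

noncomputable section

/-- `ℝ^d`, modelled as `Fin d → ℝ` and carrying the maximum norm. -/
abbrev Ed (d : ℕ) := Fin d → ℝ

/-- The half-open unit cube `𝒬 = (0,1]^d`. -/
def Qcube (d : ℕ) : Set (Ed d) := {x | ∀ i, x i ∈ Set.Ioc (0:ℝ) 1}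

/-- The half-open dyadic cube of generation `n` with index `k ∈ ℤ^d`. -/
def dyadicCube (d n : ℕ) (k : Fin d → ℤ) : Set (Ed d) :=
  {x | ∀ i, x i ∈ Set.Ioc ((k i : ℝ) / 2 ^ n) (((k i : ℝ) + 1) / 2 ^ n)}

/-- The family `𝒟_n` of dyadic cubes of generation `n`, forming a partition of `𝒬`. -/
def Dn (d n : ℕ) : Set (Set (Ed d)) :=
  {S | ∃ k : Fin d → ℤ, (∀ i, 0 ≤ k i ∧ k i < 2 ^ n) ∧ S = dyadicCube d n k}

/-- All dyadic cubes `𝒟 = ⋃_n 𝒟_n` (inside `𝒬`). -/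
def Ddy (d : ℕ) : Set (Set (Ed d)) := ⋃ n, Dn d n

/-- All dyadic cubes of generation `n` in `ℝ^d`. -/
def DnAll (d n : ℕ) : Set (Set (Ed d)) := {S | ∃ k : Fin d → ℤ, S = dyadicCube d n k}

/-- Index set enumerating the cubes of `𝒟_n`. -/
def idx (d n : ℕ) : Finset (Fin d → ℤ) :=
  Fintype.piFinset fun _ => Finset.Icc 0 (2 ^ n - 1)

/-- Lebesgue measure restricted to `𝒬`. -/
def Lam (d : ℕ) : Measure (Ed d) := volume.restrict (Qcube d)

/-- `dim_∞(ν) = liminf_n max_{Q ∈ 𝒟_n} log ν(Q) / log 2^{-n}`. -/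
def dimInfty (d : ℕ) (ν : Measure (Ed d)) : ℝ :=
  liminf (fun n : ℕ =>
    (⨆ k ∈ idx d n, Real.log (ν (dyadicCube d n k)).toReal) / (-(n : ℝ) * Real.log 2)) atTop

/-- The set function `J_{ν,r}(Q) = max_{Q' ∈ 𝒟(Q)} ν(Q') Λ(Q')^{r/d}`. -/
def Jf (d : ℕ) (ν : Measure (Ed d)) (r : ℝ) (Q : Set (Ed d)) : ℝ :=
  sSup {v : ℝ | ∃ Q' ∈ Ddy d, Q' ⊆ Q ∧ v = (ν Q').toReal * (Lam d Q').toReal ^ (r / (d:ℝ))}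

/-- The `n`-th level `J`-partition sum exponent `τ_{J,n}(q)`. -/
def tauN (d : ℕ) (ν : Measure (Ed d)) (r q : ℝ) (n : ℕ) : ℝ :=
  Real.log (∑ k ∈ (idx d n).filter (fun k => 0 < Jf d ν r (dyadicCube d n k)),
    Jf d ν r (dyadicCube d n k) ^ q) / ((n : ℝ) * Real.log 2)

/-- The `J`-partition function `τ_{J_{ν,r}}(q)`. -/
def tauJ (d : ℕ) (ν : Measure (Ed d)) (r q : ℝ) : ℝ :=
  limsup (tauN d ν r q) atTop

/-- The critical value `q_r = inf{q > 0 : τ_{J_{ν,r}}(q) < 0}`. -/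
def qrCrit (d : ℕ) (ν : Measure (Ed d)) (r : ℝ) : ℝ :=
  sInf {q : ℝ | 0 < q ∧ tauJ d ν r q < 0}

/-- The `n`-th level `L^q`-sum exponent `β_{ν,n}(q)`. -/
def betaN (d : ℕ) (ν : Measure (Ed d)) (q : ℝ) (n : ℕ) : ℝ :=
  Real.log (∑ k ∈ (idx d n).filter (fun k => 0 < ν (dyadicCube d n k)),
    ((ν (dyadicCube d n k)).toReal) ^ q) / ((n : ℝ) * Real.log 2)

/-- The `L^q`-spectrum `β_ν(q)`. -/
def betaNu (d : ℕ) (ν : Measure (Ed d)) (q : ℝ) : ℝ := limsup (betaN d ν q) atTop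

/-- Upper Minkowski (box-counting) dimension of the support of `ν`, computed through the
number of dyadic cubes of positive measure. -/
def dimMUpper (d : ℕ) (ν : Measure (Ed d)) : ℝ :=
  limsup (fun n : ℕ =>
    Real.log (((idx d n).filter fun k => 0 < ν (dyadicCube d n k)).card) /
      ((n : ℝ) * Real.log 2)) atTop

/-- `log⁺`. -/
def logPlus (x : ℝ) : ℝ := Real.log (max x 1)

/-- `N_{ν,α,r}(n) = card{Q ∈ 𝒟_n : J_{ν,r}(Q) ≥ 2^{-αn}}`. -/
def Ncount (d : ℕ) (ν : Measure (Ed d)) (α r : ℝ) (n : ℕ) : ℕ :=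
  ((idx d n).filter fun k => (2:ℝ) ^ (-(α * (n:ℝ))) ≤ Jf d ν r (dyadicCube d n k)).card

/-- `F̄_{ν,r}(α)`. -/
def FUpperAt (d : ℕ) (ν : Measure (Ed d)) (r α : ℝ) : ℝ :=
  limsup (fun n : ℕ => logPlus (Ncount d ν α r n) / ((n : ℝ) * Real.log 2)) atTop

/-- `F̲_{ν,r}(α)`. -/
def FLowerAt (d : ℕ) (ν : Measure (Ed d)) (r α : ℝ) : ℝ :=
  liminf (fun n : ℕ => logPlus (Ncount d ν α r n) / ((n : ℝ) * Real.log 2)) atTop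

/-- The upper optimized coarse multifractal dimension `F̄_r = sup_{α>0} F̄_{ν,r}(α)/α`. -/
def FUpper (d : ℕ) (ν : Measure (Ed d)) (r : ℝ) : ℝ :=
  sSup {v : ℝ | ∃ α : ℝ, 0 < α ∧ v = FUpperAt d ν r α / α}

/-- The lower optimized coarse multifractal dimension `F̲_r = sup_{α>0} F̲_{ν,r}(α)/α`. -/
def FLower (d : ℕ) (ν : Measure (Ed d)) (r : ℝ) : ℝ :=
  sSup {v : ℝ | ∃ α : ℝ, 0 < α ∧ v = FLowerAt d ν r α / α}

/-- A finite partition of `𝒬` by dyadic cubes. -/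
def IsDyadicPartition (d : ℕ) (P : Finset (Set (Ed d))) : Prop :=
  (∀ Q ∈ P, Q ∈ Ddy d) ∧ (P : Set (Set (Ed d))).PairwiseDisjoint id ∧
    ⋃₀ (P : Set (Set (Ed d))) = Qcube d

/-- `M_{ν,r}(x) = inf{card P : P ∈ Π, max_{Q ∈ P} J_{ν,r}(Q) < 1/x}`. -/
def Mx (d : ℕ) (ν : Measure (Ed d)) (r x : ℝ) : ℕ :=
  sInf {m : ℕ | ∃ P : Finset (Set (Ed d)), IsDyadicPartition d P ∧
    (∀ Q ∈ P, Jf d ν r Q < 1 / x) ∧ P.card = m}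

/-- The upper `(ν,r)`-partition entropy `h̄_{ν,r}`. -/
def hUpper (d : ℕ) (ν : Measure (Ed d)) (r : ℝ) : ℝ :=
  limsup (fun x : ℝ => Real.log (Mx d ν r x) / Real.log x) atTop

/-- The lower `(ν,r)`-partition entropy `h̲_{ν,r}`. -/
def hLowerBase (d : ℕ) (ν : Measure (Ed d)) (r : ℝ) : ℝ :=
  liminf (fun x : ℝ => Real.log (Mx d ν r x) / Real.log x) atTop

/-- `h̲_r = lim_{ε ↓ 0} h̲_{ν,r-ε}`. -/
def hLowerLim (d : ℕ) (ν : Measure (Ed d)) (r : ℝ) : ℝ :=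
  limUnder (𝓝[>] (0:ℝ)) (fun ε => hLowerBase d ν (r - ε))

/-- The value `(∫ d(x,A)^r dν)^{1/r}` (resp. `exp ∫ log d(x,A) dν` for `r = 0`) of the
quantization functional at the codebook `A`; computed in `[0,∞]` so that for `r < 0` a
non-integrable integrand gives the value `0`. -/
def eVal (d : ℕ) (ν : Measure (Ed d)) (A : Finset (Ed d)) (r : ℝ) : ℝ :=
  if r = 0 then Real.exp (∫ x, Real.log (infDist x (A : Set (Ed d))) ∂ν)
  else ((∫⁻ x, ENNReal.ofReal (infDist x (A : Set (Ed d))) ^ r ∂ν) ^ (1 / r)).toReal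

/-- The `n`-th quantization error `e_{n,r}(ν)` of order `r`. -/
def qerr (d : ℕ) (ν : Measure (Ed d)) (n : ℕ) (r : ℝ) : ℝ :=
  sInf {e : ℝ | ∃ A : Finset (Ed d), A.Nonempty ∧ A.card ≤ n ∧ e = eVal d ν A r}

/-- The upper quantization dimension `D̄_r(ν)` (with the convention `1/log 0 = 0`,
realized by `Real.log 0 = 0`). -/
def upperD (d : ℕ) (ν : Measure (Ed d)) (r : ℝ) : ℝ :=
  limsup (fun n : ℕ => Real.log n / (- Real.log (qerr d ν n r))) atTop

/-- The lower quantization dimension `D̲_r(ν)`. -/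
def lowerD (d : ℕ) (ν : Measure (Ed d)) (r : ℝ) : ℝ :=
  liminf (fun n : ℕ => Real.log n / (- Real.log (qerr d ν n r))) atTop

/-- The sequence `n^{1/κ} e_{n,r}(ν)`, viewed in `[0,∞]`. -/
def qcoefSeq (d : ℕ) (ν : Measure (Ed d)) (κ r : ℝ) (n : ℕ) : ℝ≥0∞ :=
  ENNReal.ofReal ((n : ℝ) ^ (1 / κ) * qerr d ν n r)

/-- The `κ`-dimensional quantization coefficient of order `r` exists and equals `c`. -/
def HasQCoef (d : ℕ) (ν : Measure (Ed d)) (κ r : ℝ) (c : ℝ≥0∞) : Prop :=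
  Tendsto (qcoefSeq d ν κ r) atTop (𝓝 c)

/-- The `κ`-dimensional quantization coefficient of order `r` (junk value if the limit
does not exist). -/
def qcoef (d : ℕ) (ν : Measure (Ed d)) (κ r : ℝ) : ℝ≥0∞ :=
  limUnder atTop (qcoefSeq d ν κ r)

/-- `s_h = sup{s > 0 : ‖h‖_{L^s(Λ)} < ∞}`. -/
def sCrit (d : ℕ) (h : Ed d → ℝ≥0∞) : ℝ :=
  sSup {s : ℝ | 0 < s ∧ ∫⁻ x in Qcube d, h x ^ s < ⊤}

/-- `Φ_r(h)`. -/
def Phi (d : ℕ) (r : ℝ) (h : Ed d → ℝ≥0∞) : ℝ :=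
  if r ≤ -(d:ℝ) then 0
  else if r = 0 then
    Real.exp (-(1/(d:ℝ)) * ∫ x in Qcube d, (h x).toReal * Real.log (h x).toReal)
  else ((∫⁻ x in Qcube d, h x ^ ((d:ℝ)/((d:ℝ)+r))) ^ (((d:ℝ)+r)/(d:ℝ) * (1/r))).toReal

/-- `a_ν = sup{q_r : r ∈ (-dim_∞(ν),0)}`, computed in `[0,∞]`. -/
def aNu (d : ℕ) (ν : Measure (Ed d)) : ℝ≥0∞ :=
  ⨆ r ∈ Set.Ioo (-(dimInfty d ν)) (0:ℝ), ENNReal.ofReal (qrCrit d ν r)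

/-- `ν` is multifractal-regular at `r`. -/
def MFregular (d : ℕ) (ν : Measure (Ed d)) (r : ℝ) : Prop :=
  FLower d ν r = FUpper d ν r

/-- `ν` is partition function regular at `r`. -/
def PFregular (d : ℕ) (ν : Measure (Ed d)) (r : ℝ) : Prop :=
  (∃ ε > 0, ∀ q ∈ Set.Ioo (qrCrit d ν r - ε) (qrCrit d ν r),
      Tendsto (tauN d ν r q) atTop (𝓝 (tauJ d ν r q))) ∨
  (Tendsto (tauN d ν r (qrCrit d ν r)) atTop (𝓝 (tauJ d ν r (qrCrit d ν r))) ∧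
      DifferentiableAt ℝ (tauJ d ν r) (qrCrit d ν r))

/-- Distance between two sets. -/
def setDist (d : ℕ) (S T : Set (Ed d)) : ℝ :=
  sInf {v : ℝ | ∃ x ∈ S, ∃ y ∈ T, v = dist x y}

/-- The `2^{-n+1}`-parallel set `B_n(Q̃)` of a dyadic cube `Q̃`. -/
def parSet (d n : ℕ) (Qt : Set (Ed d)) : Set (Ed d) :=
  ⋃ Q ∈ {Q ∈ DnAll d (n-1) | (closure Qt ∩ closure Q).Nonempty}, Q

/-- `V_{n,r}(μ) = sup_A ∫ d(x,A)^r dμ` for `r < 0`, computed in `[0,∞]`. -/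
def Vnr (d : ℕ) (μ : Measure (Ed d)) (n : ℕ) (r : ℝ) : ℝ≥0∞ :=
  ⨆ (A : Finset (Ed d)) (_ : A.Nonempty ∧ A.card ≤ n),
    ∫⁻ x, ENNReal.ofReal (infDist x (A : Set (Ed d))) ^ r ∂μ

/-!
Double counting turns the sum into `∑_{a ∈ A} #{Q̃ ∈ P | a ∈ B_n(Q̃)}`. If `a ∈ B_n(Q̃)`, the cube
of `𝒟_{n-1}` containing `a` touches `Q̃`; as `Q̃` has generation at most `n - 1`, it contains one
of the `3^d` cubes of `𝒟_{n-1}` adjacent to that cube (the cube itself included). Disjoint members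
of `P` contain different such cubes, so every `a` is counted at most `3^d` times.
-/

namespace Set.PairwiseDisjoint

variable {α ι : Type*}

theorem card_le_card_of_forall_exists_subset {P : Finset (Set α)}
    (hdisj : (P : Set (Set α)).PairwiseDisjoint id) {T : Finset ι} {f : ι → Set α}
    (hf : ∀ j ∈ T, (f j).Nonempty) (h : ∀ Q ∈ P, ∃ j ∈ T, f j ⊆ Q) :
    P.card ≤ T.card := by
  refine Finset.card_le_card_of_forall_subsingleton (fun Q j => f j ⊆ Q) h
    fun j hj Q₁ hQ₁ Q₂ hQ₂ => ?_
  by_contra hne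
  obtain ⟨x, hx⟩ := hf j hj
  exact Set.disjoint_left.1 (hdisj hQ₁.1 hQ₂.1 hne) (hQ₁.2 hx) (hQ₂.2 hx)

end Set.PairwiseDisjoint

theorem exists_unit_subinterval_of_touching {a b c : ℤ} (hab : a < b) (hac : a ≤ c + 1)
    (hcb : c ≤ b) : ∃ j, a ≤ j ∧ j + 1 ≤ b ∧ c - 1 ≤ j ∧ j ≤ c + 1 :=
  ⟨max a (min c (b - 1)), by omega, by omega, by omega, by omega⟩

section DyadicCube

variable {d : ℕ}

theorem mem_dyadicCube_iff {m : ℕ} {k : Fin d → ℤ} {x : Ed d} :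
    x ∈ dyadicCube d m k ↔ ∀ i, (k i : ℝ) < x i * 2 ^ m ∧ x i * 2 ^ m ≤ k i + 1 := by
  refine forall_congr' fun i => ?_
  rw [Set.mem_Ioc, div_lt_iff₀ (by positivity), le_div_iff₀ (by positivity)]

theorem closure_dyadicCube_subset {m : ℕ} (k : Fin d → ℤ) :
    closure (dyadicCube d m k) ⊆ {x | ∀ i, (k i : ℝ) ≤ x i * 2 ^ m ∧ x i * 2 ^ m ≤ k i + 1} := by
  refine closure_minimal (fun x hx i => ?_) ?_
  · exact ⟨(mem_dyadicCube_iff.1 hx i).1.le, (mem_dyadicCube_iff.1 hx i).2⟩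
  · simp only [Set.ofPred_forall, Set.ofPred_and]
    exact isClosed_iInter fun i =>
      (isClosed_le continuous_const (by fun_prop)).inter (isClosed_le (by fun_prop) continuous_const)

theorem dyadicCube_nonempty (m : ℕ) (k : Fin d → ℤ) : (dyadicCube d m k).Nonempty :=
  ⟨fun i => (k i + 1) / 2 ^ m, mem_dyadicCube_iff.2 fun i => by
    rw [div_mul_cancel₀ _ (by positivity)]; constructor <;> linarith⟩

theorem dyadicCube_subset_dyadicCube {g N : ℕ} (hg : g ≤ N) {m j : Fin d → ℤ}
    (h : ∀ i, m i * 2 ^ (N - g) ≤ j i ∧ j i + 1 ≤ (m i + 1) * 2 ^ (N - g)) :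
    dyadicCube d N j ⊆ dyadicCube d g m := by
  intro x hx
  rw [mem_dyadicCube_iff] at hx ⊢
  intro i
  have hscale : x i * (2:ℝ) ^ N = x i * 2 ^ g * 2 ^ (N - g) := by
    rw [mul_assoc, ← pow_add, Nat.add_sub_cancel' hg]
  have hlo : (m i : ℝ) * 2 ^ (N - g) ≤ j i := by exact_mod_cast (h i).1
  have hhi : (j i : ℝ) + 1 ≤ (m i + 1) * 2 ^ (N - g) := by exact_mod_cast (h i).2
  have hpos : (0:ℝ) < 2 ^ (N - g) := by positivity
  obtain ⟨hxlo, hxhi⟩ := hx i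
  rw [hscale] at hxlo hxhi
  exact ⟨lt_of_mul_lt_mul_right (hlo.trans_lt hxlo) hpos.le,
    le_of_mul_le_mul_right (hxhi.trans hhi) hpos⟩

def dyadicIndex (N : ℕ) (a : Ed d) : Fin d → ℤ := fun i => ⌈a i * 2 ^ N⌉ - 1

theorem eq_dyadicIndex_of_mem {N : ℕ} {k : Fin d → ℤ} {a : Ed d} (h : a ∈ dyadicCube d N k) :
    k = dyadicIndex N a := by
  funext i
  have hk := mem_dyadicCube_iff.1 h i
  have hceil : ⌈a i * 2 ^ N⌉ = k i + 1 := by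
    rw [Int.ceil_eq_iff]
    push_cast
    constructor <;> linarith
  simp only [dyadicIndex, hceil, add_sub_cancel_right]

theorem card_Icc_sub_one_add_one (c : Fin d → ℤ) : (Finset.Icc (c - 1) (c + 1)).card = 3 ^ d := by
  have h3 : ∀ i, (c i + 1 + 1 - (c i - 1)).toNat = 3 := fun i => by omega
  simp only [Pi.card_Icc, Pi.sub_apply, Pi.add_apply, Pi.one_apply, Int.card_Icc, h3,
    Finset.prod_const, Finset.card_univ, Fintype.card_fin]

end DyadicCube

theorem exists_dyadicCube_subset_of_mem_parSet {d n g : ℕ} (hg : g ≤ n - 1) (m : Fin d → ℤ)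
    {a : Ed d} (ha : a ∈ parSet d n (dyadicCube d g m)) :
    ∃ j ∈ Finset.Icc (dyadicIndex (n - 1) a - 1) (dyadicIndex (n - 1) a + 1),
      dyadicCube d (n - 1) j ⊆ dyadicCube d g m := by
  rw [parSet, Set.mem_iUnion₂] at ha
  obtain ⟨_, ⟨⟨k, rfl⟩, x, hxm, hxk⟩, haQ⟩ := ha
  rw [← eq_dyadicIndex_of_mem haQ]
  have hcoord : ∀ i, ∃ j : ℤ, m i * 2 ^ (n - 1 - g) ≤ j ∧ j + 1 ≤ (m i + 1) * 2 ^ (n - 1 - g) ∧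
      k i - 1 ≤ j ∧ j ≤ k i + 1 := by
    intro i
    obtain ⟨hm₁, hm₂⟩ := closure_dyadicCube_subset m hxm i
    obtain ⟨hk₁, hk₂⟩ := closure_dyadicCube_subset k hxk i
    have hscale : x i * (2:ℝ) ^ (n - 1) = x i * 2 ^ g * 2 ^ (n - 1 - g) := by
      rw [mul_assoc, ← pow_add, Nat.add_sub_cancel' hg]
    have hlo : (m i : ℝ) * 2 ^ (n - 1 - g) ≤ k i + 1 :=
      calc (m i : ℝ) * 2 ^ (n - 1 - g) ≤ x i * 2 ^ g * 2 ^ (n - 1 - g) := by gcongr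
        _ ≤ k i + 1 := hscale ▸ hk₂
    have hhi : (k i : ℝ) ≤ (m i + 1) * 2 ^ (n - 1 - g) :=
      calc (k i : ℝ) ≤ x i * 2 ^ g * 2 ^ (n - 1 - g) := hscale ▸ hk₁
        _ ≤ (m i + 1) * 2 ^ (n - 1 - g) := by gcongr
    apply exists_unit_subinterval_of_touching
    · have : (0:ℤ) < 2 ^ (n - 1 - g) := by positivity
      linarith
    · exact_mod_cast hlo
    · exact_mod_cast hhi
  choose j hj using hcoord
  exact ⟨j, Finset.mem_Icc.2 ⟨fun i => (hj i).2.2.1, fun i => (hj i).2.2.2⟩,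
    dyadicCube_subset_dyadicCube hg fun i => ⟨(hj i).1, (hj i).2.1⟩⟩

theorem card_filter_mem_parSet_le {d n : ℕ} {P : Finset (Set (Ed d))}
    (hP : ∀ Q ∈ P, ∃ g ≤ n - 1, Q ∈ DnAll d g)
    (hdisj : (P : Set (Set (Ed d))).PairwiseDisjoint id) (a : Ed d) :
    (P.filter fun Q => a ∈ parSet d n Q).card ≤ 3 ^ d := by
  rw [← card_Icc_sub_one_add_one (dyadicIndex (n - 1) a)]
  have hdisj' := hdisj.subset (Finset.coe_subset.2 (Finset.filter_subset (a ∈ parSet d n ·) P))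
  refine hdisj'.card_le_card_of_forall_exists_subset (fun j _ => dyadicCube_nonempty (n - 1) j)
    fun Q hQ => ?_
  obtain ⟨hQP, haQ⟩ := Finset.mem_filter.1 hQ
  obtain ⟨g, hg, m, rfl⟩ := hP Q hQP
  exact exists_dyadicCube_subset_of_mem_parSet hg m haQ

theorem sum_card_parallel_sets_le_general
    (d : ℕ) (A : Finset (Ed d)) (n : ℕ)
    (P : Finset (Set (Ed d)))
    (hP : ∀ Q ∈ P, ∃ k : ℕ, 1 ≤ k ∧ k ≤ n - 1 ∧ Q ∈ DnAll d k)
    (hdisj : (P : Set (Set (Ed d))).PairwiseDisjoint id) :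
    ∑ Qt ∈ P, ((A : Set (Ed d)) ∩ parSet d n Qt).ncard ≤ 3 ^ d * A.card := by
  let r : Ed d → Set (Ed d) → Prop := fun a Q => a ∈ parSet d n Q
  have hP' : ∀ Q ∈ P, ∃ g ≤ n - 1, Q ∈ DnAll d g := fun Q hQ =>
    let ⟨g, _, hg, hQ⟩ := hP Q hQ; ⟨g, hg, hQ⟩
  calc ∑ Qt ∈ P, ((A : Set (Ed d)) ∩ parSet d n Qt).ncard
      = ∑ Qt ∈ P, (A.bipartiteBelow r Qt).card := by
        refine Finset.sum_congr rfl fun Qt _ => ?_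
        rw [← Set.ncard_coe_finset, Finset.coe_bipartiteBelow]
        rfl
    _ = ∑ a ∈ A, (P.bipartiteAbove r a).card :=
        (Finset.sum_card_bipartiteAbove_eq_sum_card_bipartiteBelow r).symm
    _ ≤ ∑ _a ∈ A, 3 ^ d := Finset.sum_le_sum fun a _ => card_filter_mem_parSet_le hP' hdisj a
    _ = 3 ^ d * A.card := by rw [Finset.sum_const, smul_eq_mul, mul_comm]

/-- for a finite pairwise disjoint family `P ⊆ ⋃_{k=1}^{n-1} 𝒟_k` of dyadic
cubes and a finite set `A ⊆ ℝ^d`, `Σ_{Q̃∈P} card(A ∩ B_n(Q̃)) ≤ 3^d · card A`. -/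
theorem sum_card_parallel_sets_le
    (d : ℕ) (hd : 0 < d) (A : Finset (Ed d)) (n : ℕ)
    (P : Finset (Set (Ed d)))
    (hP : ∀ Q ∈ P, ∃ k : ℕ, 1 ≤ k ∧ k ≤ n - 1 ∧ Q ∈ DnAll d k)
    (hdisj : (P : Set (Set (Ed d))).PairwiseDisjoint id) :
    ∑ Qt ∈ P, ((A : Set (Ed d)) ∩ parSet d n Qt).ncard ≤ 3 ^ d * A.card :=
  sum_card_parallel_sets_le_general d A n P hP hdisj
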